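/- Let Λ be a finite-dimensional k-algebra admitting a nondegenerate associative bilinear form whose associated Nakayama automorphism ν has finite order, and let G be the finite cyclic group generated by ν acting on Λ. Then the skew group algebra ΛG is a symmetric algebra: it admits a bilinear form that is nondegenerate, associative and symmetric. -/

import Mathlib

/-!
Write `B a b = ε (a * b)` with `ε = B 1`. On `ΛG` take `Bs x y = ε ((x y)(g₀))`, the functional
`ε` applied to the `ν`-component of the product. Associativity of `Bs` is associativity of `ΛG`,
and pairing `x` with `(ρ h)⁻¹ b ⊗ h⁻¹ g₀` isolates `ε (x h * b)`, giving nondegeneracy. The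
Nakayama relation makes `ε` invariant under `ν`, hence under all of `G`, and then
`ε (a * g b) = ε (b * (g⁻¹ g₀) a)`; as `G` is abelian, `g ↦ g⁻¹ g₀` matches the summands of
`(x y)(g₀)` with those of `(y x)(g₀)`, giving symmetry.
-/

/-- The multiplication of the skew group algebra `ΛG`, modeled on the vector space of
functions `G → Λ` (the element `λ ⊗ g` being `Pi.single g λ`), where the finite group `G`
acts on `Λ` via `ρ : G →* (Λ ≃ₐ[k] Λ)`.  It is the bilinear extension of
`(λ ⊗ g)(λ' ⊗ g') = λ g(λ') ⊗ gg'`. -/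
def skewMul {k Λ G : Type*} [Field k] [Ring Λ] [Algebra k Λ] [Group G] [Fintype G]
    (ρ : G →* (Λ ≃ₐ[k] Λ)) (f f' : G → Λ) : G → Λ :=
  fun x => ∑ g : G, f g * ρ g (f' (g⁻¹ * x))

open Finset

/-- `ν` is a Nakayama automorphism for the form `(a, b) ↦ ε (a * b)`. -/
def IsNakayama {k Λ : Type*} [CommSemiring k] [Semiring Λ] [Algebra k Λ]
    (ε : Λ →ₗ[k] k) (ν : Λ ≃ₐ[k] Λ) : Prop :=
  ∀ a b, ε (a * b) = ε (b * ν a)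

namespace IsNakayama

variable {k Λ G : Type*} [CommSemiring k] [Semiring Λ] [Algebra k Λ] [Group G]
  {ε : Λ →ₗ[k] k} {ν : Λ ≃ₐ[k] Λ}

theorem apply_map (h : IsNakayama ε ν) (a : Λ) : ε (ν a) = ε a := by
  simpa using (h a 1).symm

theorem apply_pow_map (h : IsNakayama ε ν) (n : ℕ) (a : Λ) : ε ((ν ^ n) a) = ε a := by
  induction n with
  | zero => rfl
  | succ n ih => rw [pow_succ', AlgEquiv.mul_apply, h.apply_map, ih]

theorem apply_mul_map {ρ : G →* (Λ ≃ₐ[k] Λ)} {g₀ : G} (h : IsNakayama ε (ρ g₀))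
    (hinv : ∀ g a, ε (ρ g a) = ε a) (g : G) (a b : Λ) :
    ε (a * ρ g b) = ε (b * ρ (g⁻¹ * g₀) a) :=
  calc ε (a * ρ g b) = ε (ρ g b * ρ g₀ a) := h a (ρ g b)
    _ = ε (ρ g (b * ρ (g⁻¹ * g₀) a)) := by
      rw [map_mul (ρ g) b, ← AlgEquiv.mul_apply, ← map_mul, mul_inv_cancel_left]
    _ = ε (b * ρ (g⁻¹ * g₀) a) := hinv g _

end IsNakayama

section SkewGroupAlgebra

variable {k Λ G : Type*} [Field k] [Ring Λ] [Algebra k Λ] [Group G] [Fintype G]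
  (ρ : G →* (Λ ≃ₐ[k] Λ))

theorem skewMul_add_left (x x' y : G → Λ) :
    skewMul ρ (x + x') y = skewMul ρ x y + skewMul ρ x' y := by
  funext t
  simp [skewMul, add_mul, sum_add_distrib]

theorem skewMul_smul_left (c : k) (x y : G → Λ) :
    skewMul ρ (c • x) y = c • skewMul ρ x y := by
  funext t
  simp [skewMul, smul_sum]

theorem skewMul_add_right (x y y' : G → Λ) :
    skewMul ρ x (y + y') = skewMul ρ x y + skewMul ρ x y' := by
  funext t
  simp [skewMul, mul_add, sum_add_distrib]

theorem skewMul_smul_right (c : k) (x y : G → Λ) :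
    skewMul ρ x (c • y) = c • skewMul ρ x y := by
  funext t
  simp [skewMul, smul_sum]

theorem skewMul_assoc (x y z : G → Λ) :
    skewMul ρ (skewMul ρ x y) z = skewMul ρ x (skewMul ρ y z) := by
  funext t
  simp only [skewMul, sum_mul, map_sum, mul_sum, map_mul, mul_assoc]
  rw [sum_comm]
  refine sum_congr rfl fun g _ => Fintype.sum_equiv (Equiv.mulLeft g⁻¹) _ _ fun h => ?_
  simp [AlgEquiv.mul_apply, mul_assoc]

def skewTraceForm (ε : Λ →ₗ[k] k) (g₀ : G) : LinearMap.BilinForm k (G → Λ) :=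
  LinearMap.mk₂ k (fun x y => ε (skewMul ρ x y g₀))
    (fun x x' y => by simp [skewMul_add_left])
    (fun c x y => by simp [skewMul_smul_left])
    (fun x y y' => by simp [skewMul_add_right])
    (fun c x y => by simp [skewMul_smul_right])

variable {ρ} {ε : Λ →ₗ[k] k} {g₀ : G}

theorem skewTraceForm_apply (x y : G → Λ) :
    skewTraceForm ρ ε g₀ x y = ε (skewMul ρ x y g₀) := rfl

theorem skewTraceForm_skewMul (x y z : G → Λ) :
    skewTraceForm ρ ε g₀ (skewMul ρ x y) z = skewTraceForm ρ ε g₀ x (skewMul ρ y z) := by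
  simp only [skewTraceForm_apply, skewMul_assoc]

theorem separatingLeft_skewTraceForm (hnd : ∀ a : Λ, (∀ b, ε (a * b) = 0) → a = 0) :
    (skewTraceForm ρ ε g₀).SeparatingLeft := by
  classical
  intro x hx
  funext h
  refine hnd (x h) fun b => ?_
  -- pair `x` with `(ρ h)⁻¹ b` placed at `h⁻¹ g₀`: only the `h`-summand survives
  have hsingle := hx (Pi.single (h⁻¹ * g₀) ((ρ h).symm b))
  rw [skewTraceForm_apply, skewMul, sum_eq_single h] at hsingle
  · simpa using hsingle
  · intro g _ hgh
    rw [Pi.single_eq_of_ne (by simpa using hgh), map_zero, mul_zero]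
  · simp

theorem skewTraceForm_isSymm (hinv : ∀ g a, ε (ρ g a) = ε a)
    (hnak : IsNakayama ε (ρ g₀)) (hcomm : ∀ g, Commute g g₀) :
    (skewTraceForm ρ ε g₀).IsSymm := by
  refine LinearMap.BilinForm.isSymm_def.mpr fun x y => ?_
  simp only [skewTraceForm_apply, skewMul, map_sum]
  refine Fintype.sum_equiv ((Equiv.inv G).trans (Equiv.mulRight g₀)) _ _ fun g => ?_
  rw [hnak.apply_mul_map hinv]
  simp [mul_assoc, (hcomm g).eq]

end SkewGroupAlgebra

theorem stmt_6_general (k Λ G : Type*) [Field k] [Ring Λ] [Algebra k Λ]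
    [Group G] [Fintype G]
    (B : Λ → Λ → k)
    -- `B` is bilinear
    (hadd_r : ∀ x y y' : Λ, B x (y + y') = B x y + B x y')
    (hsmul_r : ∀ (c : k) (x y : Λ), B x (c • y) = c * B x y)
    -- `B` is associative
    (hassoc : ∀ x y z : Λ, B (x * y) z = B x (y * z))
    -- `B` is nondegenerate
    (hnd : ∀ x : Λ, (∀ y : Λ, B x y = 0) → x = 0)
    -- `ν` is the associated Nakayama automorphism, of finite order
    (ν : Λ ≃ₐ[k] Λ) (hν : ∀ a b : Λ, B a b = B b (ν a))
    -- `G` is the finite cyclic group generated by `ν`, acting on `Λ` via `ρ`: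
    -- it is generated by an element `g₀` of order `orderOf ν` which acts as `ν`
    (ρ : G →* (Λ ≃ₐ[k] Λ)) (g₀ : G) (hg₀ : ρ g₀ = ν)
    (hgen : ∀ g : G, g ∈ Subgroup.zpowers g₀) :
    -- `ΛG` is symmetric: it admits a nondegenerate associative symmetric bilinear form
    ∃ Bs : (G → Λ) → (G → Λ) → k,
      -- bilinear
      (∀ x x' y : G → Λ, Bs (x + x') y = Bs x y + Bs x' y) ∧
      (∀ (c : k) (x y : G → Λ), Bs (c • x) y = c * Bs x y) ∧
      (∀ x y y' : G → Λ, Bs x (y + y') = Bs x y + Bs x y') ∧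
      (∀ (c : k) (x y : G → Λ), Bs x (c • y) = c * Bs x y) ∧
      -- associative
      (∀ x y z : G → Λ, Bs (skewMul ρ x y) z = Bs x (skewMul ρ y z)) ∧
      -- symmetric
      (∀ x y : G → Λ, Bs x y = Bs y x) ∧
      -- nondegenerate
      (∀ x : G → Λ, (∀ y : G → Λ, Bs x y = 0) → x = 0) := by
  let ε : Λ →ₗ[k] k := ⟨⟨B 1, hadd_r 1⟩, fun c => hsmul_r c 1⟩
  have hB (a b : Λ) : B a b = ε (a * b) :=
    (by simpa using hassoc 1 a b : B a b = B 1 (a * b))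
  have hnak : IsNakayama ε (ρ g₀) := fun a b => by rw [← hB, ← hB, hg₀, hν]
  have hinv (g : G) (a : Λ) : ε (ρ g a) = ε a := by
    obtain ⟨n, rfl⟩ := mem_powers_iff_mem_zpowers.mpr (hgen g)
    rw [map_pow]
    exact hnak.apply_pow_map n a
  have hcomm (g : G) : Commute g g₀ := by
    obtain ⟨n, rfl⟩ := hgen g
    exact Commute.zpow_self g₀ n
  refine ⟨fun x y => skewTraceForm ρ ε g₀ x y, LinearMap.map_add₂ _, LinearMap.map_smul₂ _,
    fun x => map_add _, fun c x => map_smul _ c, skewTraceForm_skewMul,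
    (skewTraceForm_isSymm hinv hnak hcomm).eq, separatingLeft_skewTraceForm ?_⟩
  simpa only [← hB] using hnd

/-- Let `Λ` be a finite-dimensional `k`-algebra admitting a
nondegenerate associative bilinear form whose associated Nakayama automorphism `ν` has
finite order, and let `G` be the finite cyclic group generated by `ν`, acting on `Λ`.
Then the skew group algebra `ΛG` is a symmetric algebra: it admits a bilinear form
that is nondegenerate, associative and symmetric. -/
theorem stmt_6 (k Λ G : Type*) [Field k] [Ring Λ] [Algebra k Λ] [FiniteDimensional k Λ]
    [Group G] [Fintype G] [DecidableEq G]
    (B : Λ → Λ → k)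
    -- `B` is bilinear
    (hadd_l : ∀ x x' y : Λ, B (x + x') y = B x y + B x' y)
    (hsmul_l : ∀ (c : k) (x y : Λ), B (c • x) y = c * B x y)
    (hadd_r : ∀ x y y' : Λ, B x (y + y') = B x y + B x y')
    (hsmul_r : ∀ (c : k) (x y : Λ), B x (c • y) = c * B x y)
    -- `B` is associative
    (hassoc : ∀ x y z : Λ, B (x * y) z = B x (y * z))
    -- `B` is nondegenerate
    (hnd : ∀ x : Λ, (∀ y : Λ, B x y = 0) → x = 0)
    -- `ν` is the associated Nakayama automorphism, of finite order
    (ν : Λ ≃ₐ[k] Λ) (hν : ∀ a b : Λ, B a b = B b (ν a)) (hfin : IsOfFinOrder ν)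
    -- `G` is the finite cyclic group generated by `ν`, acting on `Λ` via `ρ`:
    -- it is generated by an element `g₀` of order `orderOf ν` which acts as `ν`
    (ρ : G →* (Λ ≃ₐ[k] Λ)) (g₀ : G) (hg₀ : ρ g₀ = ν)
    (hgen : ∀ g : G, g ∈ Subgroup.zpowers g₀) (hordg : orderOf g₀ = orderOf ν) :
    -- `ΛG` is symmetric: it admits a nondegenerate associative symmetric bilinear form
    ∃ Bs : (G → Λ) → (G → Λ) → k,
      -- bilinear
      (∀ x x' y : G → Λ, Bs (x + x') y = Bs x y + Bs x' y) ∧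
      (∀ (c : k) (x y : G → Λ), Bs (c • x) y = c * Bs x y) ∧
      (∀ x y y' : G → Λ, Bs x (y + y') = Bs x y + Bs x y') ∧
      (∀ (c : k) (x y : G → Λ), Bs x (c • y) = c * Bs x y) ∧
      -- associative
      (∀ x y z : G → Λ, Bs (skewMul ρ x y) z = Bs x (skewMul ρ y z)) ∧
      -- symmetric
      (∀ x y : G → Λ, Bs x y = Bs y x) ∧
      -- nondegenerate
      (∀ x : G → Λ, (∀ y : G → Λ, Bs x y = 0) → x = 0) :=
  stmt_6_general k Λ G B hadd_r hsmul_r hassoc hnd ν hν ρ g₀ hg₀ hgen
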